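/- arXiv:2510.19815 — 3 statements merged into one kernel-verified Lean document; each statement's English description precedes it below -/
import Mathlib

section
/- Let k be a positive integer and let σ = 2^k. For every pair of strings S₁, S₂ over the alphabet [0..σ), S₁ ≺ S₂ in the lexicographic order holds if and only if ebin_k(S₁) ≺ ebin_k(S₂). -/
/-- Strict lexicographic order on strings: `U ≺ V` iff `U` is a proper prefix of `V`,
or `U` and `V` first differ at a position where `U` has the smaller symbol. -/
def LexLt {α : Type*} [LT α] (U V : List α) : Prop := List.Lex (· < ·) U V

/-- Non-strict lexicographic order on strings. -/
def LexLe {α : Type*} [LT α] (U V : List α) : Prop := LexLt U V ∨ U = V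

/-- The suffix `T[j..|T|]` of `T` (1-based index `j`). -/
def Suf {α : Type*} (T : List α) (j : ℕ) : List α := T.drop (j - 1)

/-- `Occ P T` is the set of starting positions (1-based) of occurrences of `P` in `T`. -/
def Occ {α : Type*} (P T : List α) : Set ℕ :=
  { j | 1 ≤ j ∧ j + P.length ≤ T.length + 1 ∧ (Suf T j).take P.length = P }

/-- `RangeBeg P T` = number of suffixes of `T` lexicographically smaller than `P`. -/
noncomputable def RangeBeg {α : Type*} [LT α] (P T : List α) : ℕ :=
  { j | 1 ≤ j ∧ j ≤ T.length ∧ LexLt (Suf T j) P }.ncard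

/-- `RangeEnd P T = RangeBeg P T + |Occ P T|`. -/
noncomputable def RangeEnd {α : Type*} [LT α] (P T : List α) : ℕ :=
  RangeBeg P T + (Occ P T).ncard

/-- `LexRange P₁ P₂ T` = positions `j ∈ [1..|T|]` with `P₁ ⪯ T[j..|T|] ≺ P₂`. -/
def LexRange {α : Type*} [LT α] (P₁ P₂ T : List α) : Set ℕ :=
  { j | 1 ≤ j ∧ j ≤ T.length ∧ LexLe P₁ (Suf T j) ∧ LexLt (Suf T j) P₂ }

/-- `sa` is the suffix array of `T` (1-based): a permutation of `[1..|T|]` listing the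
starting positions of the suffixes of `T` in increasing lexicographic order. -/
def IsSuffixArray {α : Type*} [LT α] (T : List α) (sa : ℕ → ℕ) : Prop :=
  (∀ i, 1 ≤ i → i ≤ T.length → 1 ≤ sa i ∧ sa i ≤ T.length) ∧
  (∀ j, 1 ≤ j → j ≤ T.length → ∃ i, 1 ≤ i ∧ i ≤ T.length ∧ sa i = j) ∧
  (∀ i j, 1 ≤ i → i < j → j ≤ T.length → LexLt (Suf T (sa i)) (Suf T (sa j)))

/-- `binSym k x` : the length-`k` binary representation of `x` (MSB first, leading zeros). -/
def binSym (k x : ℕ) : List ℕ := (List.range k).map fun i => x / 2 ^ (k - 1 - i) % 2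

/-- `binStr k S` = `bin_k(S[1]) · bin_k(S[2]) · … · bin_k(S[|S|])`. -/
def binStr (k : ℕ) (S : List ℕ) : List ℕ := (S.map (binSym k)).flatten

/-- `ebinSym k x = 1^{k+1} · 0 · bin_k(x) · 0`. -/
def ebinSym (k x : ℕ) : List ℕ := List.replicate (k + 1) 1 ++ [0] ++ binSym k x ++ [0]

/-- `ebinStr k S` = concatenation of `ebin_k(S[i])` for `i = 1, …, |S|`. -/
def ebinStr (k : ℕ) (S : List ℕ) : List ℕ := (S.map (ebinSym k)).flatten

/-- `sEnc k i` : length-`k` base-2 representation of `i` with `0 ↦ 2` and `1 ↦ 3`. -/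
def sEnc (k i : ℕ) : List ℕ := (binSym k i).map (· + 2)

/-- `SeqToString m W = ⊙_{i=1}^{m} rev(W[i]) · 4 · s(i-1)` with `k = 1 + ⌊log₂ m⌋`. -/
def SeqToString (m : ℕ) (W : ℕ → List ℕ) : List ℕ :=
  ((List.range m).map
    fun i => (W (i + 1)).reverse ++ [4] ++ sEnc (1 + Nat.log 2 m) i).flatten

/-- `PermSeqToString m π W = ⊙_{i=1}^{m} rev(W[π[i]]) · 4 · s(π[i]-1)`. -/
def PermSeqToString (m : ℕ) (perm : ℕ → ℕ) (W : ℕ → List ℕ) : List ℕ :=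
  ((List.range m).map
    fun i => (W (perm (i + 1))).reverse ++ [4]
      ++ sEnc (1 + Nat.log 2 m) (perm (i + 1) - 1)).flatten

/-- `PrefixRank W j X = |{ i ∈ [1..j] : X is a prefix of W[i] }|`. -/
noncomputable def PrefixRank {α : Type*} (W : ℕ → List α) (j : ℕ) (X : List α) : ℕ :=
  { i | 1 ≤ i ∧ i ≤ j ∧ X <+: W i }.ncard

/-- `p` is the `r`-th smallest element of the set `A ⊆ ℕ`. -/
def IsKthSmallest (A : Set ℕ) (r p : ℕ) : Prop :=
  p ∈ A ∧ (A ∩ Set.Iic p).ncard = r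

/-- Ceiling division `⌈a / b⌉` of positive naturals. -/
def cdiv (a b : ℕ) : ℕ := (a + b - 1) / b

/-- Alphabet inversion: `inv_σ(S)[i] = σ - 1 - S[i]`. -/
def invStr (σ : ℕ) (S : List ℕ) : List ℕ := S.map fun a => σ - 1 - a

/-- `p` is a period of `S`: `1 ≤ p ≤ |S|` and `S[i] = S[i+p]` for all `i ∈ [1..|S|-p]`. -/
def IsPeriod {α : Type*} (S : List α) (p : ℕ) : Prop :=
  1 ≤ p ∧ p ≤ S.length ∧ S.drop p <+: S

/-- `per S`: the smallest period of `S`. -/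
noncomputable def per {α : Type*} (S : List α) : ℕ := sInf { p | IsPeriod S p }

/-- `P` is `τ`-periodic: `|P| ≥ 3τ - 1` and `per(P[1..3τ-1]) ≤ τ/3`. -/
noncomputable def TauPeriodic {α : Type*} (τ : ℕ) (P : List α) : Prop :=
  3 * τ ≤ P.length + 1 ∧ 3 * per (P.take (3 * τ - 1)) ≤ τ

/-- `R(τ,T) = { i ∈ [1..n-3τ+2] : per(T[i..i+3τ-2]) ≤ τ/3 }`. -/
noncomputable def Rset {α : Type*} (τ : ℕ) (T : List α) : Set ℕ :=
  { i | 1 ≤ i ∧ i + 3 * τ ≤ T.length + 2 ∧ 3 * per ((Suf T i).take (3 * τ - 1)) ≤ τ }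

/-- `S` is a `τ`-synchronizing set of `T` (consistency and density conditions). -/
noncomputable def IsSyncSet {α : Type*} (τ : ℕ) (T : List α) (S : Set ℕ) : Prop :=
  (∀ j ∈ S, 1 ≤ j ∧ j + 2 * τ ≤ T.length + 1) ∧
  (∀ i j, 1 ≤ i → i + 2 * τ ≤ T.length + 1 → 1 ≤ j → j + 2 * τ ≤ T.length + 1 →
    (Suf T i).take (2 * τ) = (Suf T j).take (2 * τ) → (i ∈ S ↔ j ∈ S)) ∧
  (∀ i, 1 ≤ i → i + 3 * τ ≤ T.length + 2 → (S ∩ Set.Ico i (i + τ) = ∅ ↔ i ∈ Rset τ T))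

/-- `succ_S(x) = min { x' ∈ S : x' ≥ x }`. -/
noncomputable def succS (S : Set ℕ) (x : ℕ) : ℕ := sInf (S ∩ Set.Ici x)

/-- `DistPrefixes(τ,T,S) = { T[j..succ_S(j)+2τ) : j ∈ [1..n-3τ+2] \ R(τ,T) }`. -/
noncomputable def DistPrefixes {α : Type*} (τ : ℕ) (T : List α) (S : Set ℕ) : Set (List α) :=
  (fun j => (Suf T j).take (succS S j + 2 * τ - j)) ''
    { j | 1 ≤ j ∧ j + 3 * τ ≤ T.length + 2 ∧ j ∉ Rset τ T }

/-- `r` is the value of the prefix RMQ: the smallest index `i ∈ (b..e]` with `X` a prefix of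
`W[i]` minimizing `A[i]` (ties broken towards the smaller index). -/
def IsPrefixRMQ (A : ℕ → ℤ) (W : ℕ → List ℕ) (b e : ℕ) (X : List ℕ) (r : ℕ) : Prop :=
  (b < r ∧ r ≤ e ∧ X <+: W r) ∧
  (∀ i, b < i → i ≤ e → X <+: W i → A r ≤ A i) ∧
  (∀ i, b < i → i ≤ e → X <+: W i → A i = A r → r ≤ i)


lemma myLexAppendLeft {α : Type*} {r : α → α → Prop} {U V : List α} (X : List α)
    (h : List.Lex r U V) : List.Lex r (X ++ U) (X ++ V) := by
  induction X with
  | nil => simpa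
  | cons a t ih => exact List.Lex.cons ih

lemma myLexAppendOfLengthEq {α : Type*} {r : α → α → Prop} {X Y : List α}
    (h : List.Lex r X Y) : ∀ U V : List α, X.length = Y.length →
    List.Lex r (X ++ U) (Y ++ V) := by
  induction h with
  | nil => intro U V hl; simp at hl
  | @cons a l₁ l₂ h ih => intro U V hl; exact List.Lex.cons (ih U V (by simpa using hl))
  | rel h => intro U V hl; exact List.Lex.rel h

lemma myModPowBit {m k x : ℕ} (h : m < k) : x % 2 ^ k / 2 ^ m % 2 = x / 2 ^ m % 2 := by
  rw [← Nat.mod_mul_right_div_self, ← Nat.mod_mul_right_div_self,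
    Nat.mod_mod_of_dvd x (show 2 ^ m * 2 ∣ 2 ^ k by
      rw [← pow_succ]; exact pow_dvd_pow 2 (by omega))]

lemma myBinSymLength (k x : ℕ) : (binSym k x).length = k := by simp [binSym]

lemma myBinSymSucc (k x : ℕ) :
    binSym (k + 1) x = x / 2 ^ k % 2 :: binSym k (x % 2 ^ k) := by
  unfold binSym
  rw [List.range_succ_eq_map]
  simp only [List.map_cons, List.map_map]
  congr 1
  refine List.map_congr_left fun i hi => ?_
  have hik : i < k := List.mem_range.mp hi
  simp only [Function.comp_apply]
  have h1 : k + 1 - 1 - (i + 1) = k - 1 - i := by omega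
  rw [h1, myModPowBit (show k - 1 - i < k by omega)]

lemma myBinSymLex {k a b : ℕ} (hab : a < b) (hb : b < 2 ^ k) :
    List.Lex (· < ·) (binSym k a) (binSym k b) := by
  induction k generalizing a b with
  | zero => simp at hb; omega
  | succ k ih =>
    rw [myBinSymSucc, myBinSymSucc]
    rcases lt_trichotomy (a / 2 ^ k) (b / 2 ^ k) with h | h | h
    · have hb2 : b / 2 ^ k < 2 := Nat.div_lt_of_lt_mul (by rw [pow_succ] at hb; omega)
      rw [Nat.mod_eq_of_lt (lt_trans h hb2), Nat.mod_eq_of_lt hb2]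
      exact List.Lex.rel h
    · have h1 := Nat.div_add_mod a (2 ^ k)
      have h2 := Nat.div_add_mod b (2 ^ k)
      rw [h] at h1
      have hmod : a % 2 ^ k < b % 2 ^ k := by omega
      rw [h]
      exact List.Lex.cons (ih hmod (Nat.mod_lt _ (by positivity)))
    · exact absurd (Nat.div_le_div_right (c := 2 ^ k) hab.le) (by omega)

lemma myEbinSymLex {k a b : ℕ} (hab : a < b) (hb : b < 2 ^ k) (U V : List ℕ) :
    List.Lex (· < ·) (ebinSym k a ++ U) (ebinSym k b ++ V) := by
  have ea : ebinSym k a ++ U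
      = (List.replicate (k + 1) 1 ++ [0]) ++ (binSym k a ++ ([0] ++ U)) := by
    simp [ebinSym, List.append_assoc]
  have eb : ebinSym k b ++ V
      = (List.replicate (k + 1) 1 ++ [0]) ++ (binSym k b ++ ([0] ++ V)) := by
    simp [ebinSym, List.append_assoc]
  rw [ea, eb]
  exact myLexAppendLeft _ (myLexAppendOfLengthEq (myBinSymLex hab hb) _ _
    (by simp [myBinSymLength]))

lemma myEbinStrCons (k a : ℕ) (S : List ℕ) :
    ebinStr k (a :: S) = ebinSym k a ++ ebinStr k S := by
  simp [ebinStr]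

lemma myEbinMono (k : ℕ) : ∀ {S₁ S₂ : List ℕ}, List.Lex (· < ·) S₁ S₂ →
    (∀ a ∈ S₂, a < 2 ^ k) → List.Lex (· < ·) (ebinStr k S₁) (ebinStr k S₂) := by
  intro S₁ S₂ h
  induction h with
  | @nil b l =>
    intro _
    have : ebinStr k (b :: l)
        = 1 :: (List.replicate k 1 ++ ([0] ++ (binSym k b ++ ([0] ++ ebinStr k l)))) := by
      simp [myEbinStrCons, ebinSym, List.replicate_succ, List.append_assoc]
    show List.Lex (· < ·) (ebinStr k []) (ebinStr k (b :: l))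
    rw [this, show ebinStr k ([] : List ℕ) = [] from rfl]
    exact List.Lex.nil
  | @cons a l₁ l₂ h ih =>
    intro h₂
    rw [myEbinStrCons, myEbinStrCons]
    exact myLexAppendLeft _ (ih fun x hx => h₂ x (List.mem_cons_of_mem _ hx))
  | @rel a l₁ b l₂ hab =>
    intro h₂
    rw [myEbinStrCons, myEbinStrCons]
    exact myEbinSymLex hab (h₂ b List.mem_cons_self) _ _

theorem stmt0 (k : ℕ) (hk : 0 < k) (S₁ S₂ : List ℕ)
    (h₁ : ∀ a ∈ S₁, a < 2 ^ k) (h₂ : ∀ a ∈ S₂, a < 2 ^ k) :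
    LexLt S₁ S₂ ↔ LexLt (ebinStr k S₁) (ebinStr k S₂) := by
  unfold LexLt
  constructor
  · exact fun h => myEbinMono k h h₂
  · intro h
    rcases trichotomous_of (List.Lex (· < · : ℕ → ℕ → Prop)) S₁ S₂ with h' | rfl | h'
    · exact h'
    · exact absurd h (irrefl_of (List.Lex (· < · : ℕ → ℕ → Prop)) _)
    · exact absurd h (asymm_of (List.Lex (· < · : ℕ → ℕ → Prop)) (myEbinMono k h' h₁))
end

section
/- Let W[1..m] be a sequence of m ≥ 1 binary strings of length ℓ ≥ 1, let T = SeqToString_ℓ(W), let k = 1 + ⌊log₂ m⌋ and β = ℓ + k + 1. Then for every X ∈ {0,1}^{≤ℓ}, letting 𝒫 = { i ∈ [1..m] : X is a prefix of W[i] }, it holds Occ(rev(X)·4, T) = { i·β − (k + |X|) : i ∈ 𝒫 }. -/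
/-!
`SeqToString m W` is the concatenation of the blocks `rev(W[i]) · 4 · s(i-1)`, all of length
`β = ℓ + k + 1`. As the words `W[i]` are binary and the codes `s(i-1)` use only the symbols `2`
and `3`, the symbol `4` occurs exactly at the positions `iβ - k`. An occurrence of `rev(X) · 4`
therefore ends at one of them, and it is an occurrence iff the last `|X|` symbols of `rev(W[i])`
spell `rev(X)`, that is, iff `X` is a prefix of `W[i]`.
-/

theorem mem_Occ_iff {α : Type*} {P T : List α} (hP : P ≠ []) {j : ℕ} :
    j ∈ Occ P T ↔ 1 ≤ j ∧ P <+: T.drop (j - 1) := by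
  rw [Occ, Set.mem_ofPred_eq, Suf, List.prefix_iff_eq_take]
  refine ⟨fun ⟨hj, _, h⟩ => ⟨hj, h.symm⟩, fun ⟨hj, h⟩ => ⟨hj, ?_, h.symm⟩⟩
  have hlen := congrArg List.length h
  have hPpos := List.length_pos_iff.mpr hP
  simp only [List.length_take, List.length_drop] at hlen
  omega

namespace List

variable {α : Type*}

theorem prefix_append_iff_of_length_eq {l₁ l₂ s t : List α} (h : l₁.length = l₂.length) :
    l₁ ++ s <+: l₂ ++ t ↔ l₁ = l₂ ∧ s <+: t := by
  constructor
  · rintro ⟨u, hu⟩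
    obtain ⟨rfl, hst⟩ := append_inj (by simpa only [append_assoc] using hu) h
    exact ⟨rfl, u, hst⟩
  · rintro ⟨rfl, hst⟩
    exact (prefix_append_right_inj l₁).mpr hst

theorem drop_reverse_eq_reverse_iff_prefix {l₁ l₂ : List α} (h : l₁.length ≤ l₂.length) :
    l₂.reverse.drop (l₂.length - l₁.length) = l₁.reverse ↔ l₁ <+: l₂ := by
  rw [drop_reverse, Nat.sub_sub_self h, reverse_inj, prefix_iff_eq_take, eq_comm]

theorem getElem?_append_cons_eq_some_iff {a : α} {l₁ l₂ : List α} (h₁ : a ∉ l₁) (h₂ : a ∉ l₂)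
    {r : ℕ} : (l₁ ++ a :: l₂)[r]? = some a ↔ r = l₁.length := by
  refine ⟨fun h => ?_, fun h => by simp [h]⟩
  rcases lt_trichotomy r l₁.length with hlt | heq | hgt
  · rw [getElem?_append_left hlt] at h
    exact absurd (mem_of_getElem? h) h₁
  · exact heq
  · obtain ⟨s, rfl⟩ := Nat.exists_eq_add_of_lt hgt
    rw [getElem?_append_right (by omega), show l₁.length + s + 1 - l₁.length = s + 1 by omega,
      getElem?_cons_succ] at h
    exact absurd (mem_of_getElem? h) h₂

theorem length_flatten_of_forall_length_eq {L : List (List α)} {n : ℕ}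
    (h : ∀ l ∈ L, l.length = n) : L.flatten.length = L.length * n := by
  rw [length_flatten, map_congr_left h]
  simp [mul_comm]

theorem drop_mul_flatten_of_forall_length_eq {L : List (List α)} {n q : ℕ}
    (h : ∀ l ∈ L, l.length = n) (hq : q < L.length) :
    L.flatten.drop (q * n) = L[q] ++ (L.drop (q + 1)).flatten := by
  have htake : (L.take q).flatten.length = q * n := by
    rw [length_flatten_of_forall_length_eq fun l hl => h l (mem_of_mem_take hl),
      length_take_of_le hq.le]
  conv_lhs => rw [← take_append_drop q L, drop_eq_getElem_cons hq]
  rw [flatten_append, flatten_cons, drop_left' htake]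

end List

def seqBlock (W : ℕ → List ℕ) (k i : ℕ) : List ℕ := (W (i + 1)).reverse ++ 4 :: sEnc k i

theorem SeqToString_eq_flatten_seqBlock (m : ℕ) (W : ℕ → List ℕ) :
    SeqToString m W = ((List.range m).map (seqBlock W (1 + Nat.log 2 m))).flatten := by
  simp only [SeqToString, List.append_assoc, List.singleton_append]
  rfl

theorem four_notMem_sEnc (k i : ℕ) : 4 ∉ sEnc k i := by
  simp only [sEnc, binSym, List.map_map, List.mem_map, List.mem_range, Function.comp_apply,
    not_exists, not_and]
  intro j _ h
  have := Nat.mod_lt (i / 2 ^ (k - 1 - j)) two_pos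
  omega

section seqBlocks

variable {m ℓ : ℕ} {W : ℕ → List ℕ}

theorem length_seqBlock (k : ℕ) {i : ℕ} (h : (W (i + 1)).length = ℓ) :
    (seqBlock W k i).length = ℓ + k + 1 := by
  simp only [seqBlock, sEnc, binSym, List.length_append, List.length_reverse, List.length_cons,
    List.length_map, List.length_range, h]
  omega

theorem length_of_mem_map_seqBlock (k : ℕ) (hWlen : ∀ i, 1 ≤ i → i ≤ m → (W i).length = ℓ) :
    ∀ l ∈ (List.range m).map (seqBlock W k), l.length = ℓ + k + 1 := by
  simp only [List.mem_map, List.mem_range, forall_exists_index, and_imp]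
  rintro _ i hi rfl
  exact length_seqBlock k (hWlen (i + 1) (by omega) (by omega))

theorem drop_mul_flatten_seqBlock (k : ℕ) (hWlen : ∀ i, 1 ≤ i → i ≤ m → (W i).length = ℓ)
    {q : ℕ} (hq : q < m) :
    ∃ R, ((List.range m).map (seqBlock W k)).flatten.drop (q * (ℓ + k + 1)) =
      seqBlock W k q ++ R := by
  rw [List.drop_mul_flatten_of_forall_length_eq (length_of_mem_map_seqBlock k hWlen)
    (by simpa using hq), List.getElem_map, List.getElem_range]
  exact ⟨_, rfl⟩

theorem reverse_append_four_prefix_drop_flatten_seqBlock_iff (k : ℕ)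
    (hWlen : ∀ i, 1 ≤ i → i ≤ m → (W i).length = ℓ) {q : ℕ} (hq : q < m) {X : List ℕ}
    (hX : X.length ≤ ℓ) :
    X.reverse ++ [4] <+:
        ((List.range m).map (seqBlock W k)).flatten.drop (q * (ℓ + k + 1) + (ℓ - X.length)) ↔
      X <+: W (q + 1) := by
  obtain ⟨R, hR⟩ := drop_mul_flatten_seqBlock k hWlen hq
  have hW := hWlen (q + 1) (by omega) (by omega)
  rw [← List.drop_drop, hR, seqBlock, List.append_assoc,
    List.drop_append_of_le_length (by simp [hW]),
    List.prefix_append_iff_of_length_eq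
      (by simp only [List.length_drop, List.length_reverse, hW]; omega), eq_comm, ← hW,
    List.drop_reverse_eq_reverse_iff_prefix (hW ▸ hX)]
  simp

theorem exists_eq_of_reverse_append_four_prefix_drop_flatten_seqBlock (k : ℕ)
    (hWlen : ∀ i, 1 ≤ i → i ≤ m → (W i).length = ℓ)
    (hWbin : ∀ i, 1 ≤ i → i ≤ m → ∀ a ∈ W i, a < 2) {X : List ℕ} {p : ℕ}
    (h : X.reverse ++ [4] <+: ((List.range m).map (seqBlock W k)).flatten.drop p) :
    ∃ q < m, p + X.length = q * (ℓ + k + 1) + ℓ := by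
  set T := ((List.range m).map (seqBlock W k)).flatten
  set β := ℓ + k + 1 with hβ
  have hfour : T[p + X.length]? = some 4 := by
    obtain ⟨u, hu⟩ := h
    rw [← List.getElem?_drop, ← hu]
    simp
  obtain ⟨q, r, hr, hqr⟩ : ∃ q r, r < β ∧ p + X.length = q * β + r :=
    ⟨_, _, Nat.mod_lt _ (by omega), (Nat.div_add_mod' _ _).symm⟩
  have hq : q < m := by
    have hlt := (List.getElem?_eq_some_iff.mp hfour).1
    rw [List.length_flatten_of_forall_length_eq (length_of_mem_map_seqBlock k hWlen)] at hlt
    by_contra! hmq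
    have := Nat.mul_le_mul_right β hmq
    simp only [List.length_map, List.length_range, ← hβ] at hlt
    omega
  obtain ⟨R, hR⟩ := drop_mul_flatten_seqBlock k hWlen hq
  have hW := hWlen (q + 1) (by omega) (by omega)
  have hblock : (seqBlock W k q)[r]? = some 4 := by
    rwa [hqr, ← List.getElem?_drop, hR,
      List.getElem?_append_left (by rwa [length_seqBlock k hW])] at hfour
  have hnotMem : 4 ∉ (W (q + 1)).reverse := fun h4 =>
    absurd (hWbin _ (by omega) (by omega) 4 (List.mem_reverse.mp h4)) (by omega)
  rw [seqBlock, List.getElem?_append_cons_eq_some_iff hnotMem (four_notMem_sEnc _ _),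
    List.length_reverse, hW] at hblock
  exact ⟨q, hq, by rw [hqr, hblock]⟩

end seqBlocks

theorem stmt3_general (m ℓ : ℕ) (W : ℕ → List ℕ)
    (hWlen : ∀ i, 1 ≤ i → i ≤ m → (W i).length = ℓ)
    (hWbin : ∀ i, 1 ≤ i → i ≤ m → ∀ a ∈ W i, a < 2)
    (X : List ℕ) (hXlen : X.length ≤ ℓ) :
    Occ (X.reverse ++ [4]) (SeqToString m W) =
      (fun i => i * (ℓ + (1 + Nat.log 2 m) + 1) - ((1 + Nat.log 2 m) + X.length)) ''
        { i | 1 ≤ i ∧ i ≤ m ∧ X <+: W i } := by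
  rw [SeqToString_eq_flatten_seqBlock]
  generalize 1 + Nat.log 2 m = k
  have hstart : ∀ q, (q + 1) * (ℓ + k + 1) - (k + X.length) =
      q * (ℓ + k + 1) + (ℓ - X.length) + 1 := fun q => by rw [add_one_mul]; omega
  ext j
  rw [mem_Occ_iff (by simp)]
  constructor
  · rintro ⟨hj, hpre⟩
    obtain ⟨q, hq, hpos⟩ :=
      exists_eq_of_reverse_append_four_prefix_drop_flatten_seqBlock k hWlen hWbin hpre
    have hj' : j - 1 = q * (ℓ + k + 1) + (ℓ - X.length) := by omega
    rw [hj', reverse_append_four_prefix_drop_flatten_seqBlock_iff k hWlen hq hXlen] at hpre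
    exact ⟨q + 1, ⟨by omega, hq, hpre⟩, by dsimp only; rw [hstart]; omega⟩
  · rintro ⟨_ | q, ⟨hi, hqm, hpre⟩, rfl⟩
    · omega
    · dsimp only
      rw [hstart, Nat.add_sub_cancel,
        reverse_append_four_prefix_drop_flatten_seqBlock_iff k hWlen hqm hXlen]
      exact ⟨by omega, hpre⟩

theorem stmt3 (m ℓ : ℕ) (hm : 1 ≤ m) (hℓ : 1 ≤ ℓ) (W : ℕ → List ℕ)
    (hWlen : ∀ i, 1 ≤ i → i ≤ m → (W i).length = ℓ)
    (hWbin : ∀ i, 1 ≤ i → i ≤ m → ∀ a ∈ W i, a < 2)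
    (X : List ℕ) (hXlen : X.length ≤ ℓ) (hXbin : ∀ a ∈ X, a < 2) :
    Occ (X.reverse ++ [4]) (SeqToString m W) =
      (fun i => i * (ℓ + (1 + Nat.log 2 m) + 1) - ((1 + Nat.log 2 m) + X.length)) ''
        { i | 1 ≤ i ∧ i ≤ m ∧ X <+: W i } :=
  stmt3_general m ℓ W hWlen hWbin X hXlen
end

section
/- Let W[1..m] be a sequence of m ≥ 1 binary strings of length ℓ ≥ 1 and let T = SeqToString_ℓ(W). Then for every i ∈ [1..m] and every p ∈ [0..ℓ], it holds PrefixSpecialRank(W,i,p) = ISA_T[i·β − (k + p)] − α, where k = 1 + ⌊log₂ m⌋, X = W[i][1..p] is the length-p prefix of W[i], α = RangeBeg(rev(X)·4, T), and β = ℓ + ⌊log₂ m⌋ + 2. -/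
namespace Stmt7Aux


lemma lexlt_asymm {u v : List ℕ} (h : LexLt u v) : ¬ LexLt v u :=
  (List.Lex.asymm (· < ·)).asymm u v h

lemma lexlt_irrefl (u : List ℕ) : ¬ LexLt u u := fun h => lexlt_asymm h h

lemma lexlt_trichotomy (u v : List ℕ) : LexLt u v ∨ u = v ∨ LexLt v u :=
  @trichotomous_of _ (List.Lex (· < ·)) (List.Lex.trichotomous (· < ·)) u v

lemma lexle_of_prefix : ∀ {u v : List ℕ}, u <+: v → LexLe u v := by
  intro u
  induction u with
  | nil =>
    intro v _
    cases v with
    | nil => exact Or.inr rfl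
    | cons b v' => exact Or.inl List.Lex.nil
  | cons a u' ih =>
    intro v hp
    cases v with
    | nil => simp at hp
    | cons b v' =>
      rw [List.cons_prefix_cons] at hp
      obtain ⟨rfl, hp⟩ := hp
      rcases ih hp with h | rfl
      · exact Or.inl (List.Lex.cons h)
      · exact Or.inr rfl

lemma lexlt_of_lexlt_prefix {u P v : List ℕ} (h : LexLt u P) (hp : P <+: v) : LexLt u v := by
  induction h generalizing v with
  | nil =>
    obtain ⟨t, rfl⟩ := hp
    exact List.Lex.nil
  | @rel a l₁ b l₂ hab =>
    obtain ⟨t, rfl⟩ := hp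
    exact List.Lex.rel hab
  | @cons a l₁ l₂ h ih =>
    obtain ⟨t, rfl⟩ := hp
    exact List.Lex.cons (ih (l₂.prefix_append t))

lemma lex_sandwich : ∀ {P : List ℕ} {S Q : List ℕ}, LexLe P S → LexLe S (P ++ Q) → P <+: S := by
  intro P
  induction P with
  | nil => intro S Q _ _; exact List.nil_prefix
  | cons a P' ih =>
    intro S Q h1 h2
    cases S with
    | nil =>
      rcases h1 with h | h
      · cases h
      · simp at h
    | cons b S' =>
      have hab : a = b ∧ LexLe P' S' := by
        rcases h1 with h | h
        · cases h with
          | rel hr =>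
            exfalso
            rcases h2 with h2 | h2
            · cases h2 with
              | rel hr2 => omega
              | cons _ => omega
            · have : b = a := by simpa using congrArg (·.head?) h2
              omega
          | cons hc => exact ⟨rfl, Or.inl hc⟩
        · have := List.cons.inj h
          exact ⟨this.1, Or.inr this.2⟩
      obtain ⟨rfl, hPS⟩ := hab
      have hSP : LexLe S' (P' ++ Q) := by
        rcases h2 with h2 | h2
        · cases h2 with
          | rel hr2 => omega
          | cons hc => exact Or.inl hc
        · exact Or.inr (List.cons.inj h2).2
      exact (List.cons_prefix_cons).mpr ⟨rfl, ih hPS hSP⟩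

lemma lex_append_of_eq_len {u v : List ℕ} (h : List.Lex (· < ·) u v) (hlen : u.length = v.length)
    (s t : List ℕ) : LexLt (u ++ s) (v ++ t) := by
  induction h with
  | nil => simp at hlen
  | @rel a l₁ b l₂ hab => exact List.Lex.rel hab
  | @cons a l₁ l₂ h ih =>
    simp only [List.length_cons, Nat.succ_inj] at hlen
    exact List.Lex.cons (ih hlen)

lemma lex_map_add2 {u v : List ℕ} (h : List.Lex (· < ·) u v) :
    List.Lex (· < ·) (u.map (· + 2)) (v.map (· + 2)) := by
  induction h with
  | nil => simp only [List.map_nil, List.map_cons]; exact List.Lex.nil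
  | @rel a l₁ b l₂ hab => simp only [List.map_cons]; exact List.Lex.rel (by omega)
  | @cons a l₁ l₂ h ih => simp only [List.map_cons]; exact List.Lex.cons ih

lemma prefix_four : ∀ {u v w : List ℕ}, (u ++ [4]) <+: (v ++ [4] ++ w) → (4 ∉ u) → (4 ∉ v) → u = v := by
  intro u
  induction u with
  | nil =>
    intro v w hp _ hv
    cases v with
    | nil => rfl
    | cons c v' =>
      exfalso
      simp only [List.nil_append, List.cons_append, List.cons_prefix_cons] at hp
      exact hv (by simp [hp.1.symm])
  | cons a u' ih =>
    intro v w hp hu hv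
    cases v with
    | nil =>
      exfalso
      simp only [List.cons_append, List.nil_append, List.cons_prefix_cons] at hp
      exact hu (by simp [hp.1])
    | cons b v' =>
      simp only [List.cons_append, List.cons_prefix_cons] at hp
      obtain ⟨rfl, hp⟩ := hp
      have := ih (by simpa using hp) (fun h => hu (List.mem_cons_of_mem _ h))
        (fun h => hv (List.mem_cons_of_mem _ h))
      rw [this]



lemma length_binSym (k x : ℕ) : (binSym k x).length = k := by simp [binSym]

lemma length_sEnc (k x : ℕ) : (sEnc k x).length = k := by simp [sEnc, length_binSym]

lemma mem_sEnc {k x a : ℕ} (h : a ∈ sEnc k x) : 2 ≤ a ∧ a ≤ 3 := by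
  simp only [sEnc, binSym, List.mem_map, List.mem_range] at h
  obtain ⟨b, ⟨i, _, rfl⟩, rfl⟩ := h
  have := Nat.mod_lt (x / 2 ^ (k - 1 - i)) (show 0 < 2 by norm_num)
  omega

lemma binSym_succ (k x : ℕ) : binSym (k + 1) x = (x / 2 ^ k % 2) :: binSym k (x % 2 ^ k) := by
  unfold binSym
  rw [List.range_succ_eq_map, List.map_cons, List.map_map]
  refine congrArg₂ _ (by simp) (List.map_congr_left ?_)
  intro i hi
  rw [List.mem_range] at hi
  simp only [Function.comp_apply, Nat.succ_eq_add_one]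
  have h1 : k + 1 - 1 - (i + 1) = k - 1 - i := by omega
  rw [h1]
  have h2 : (2:ℕ) ^ k = 2 ^ (k - 1 - i) * 2 ^ (i + 1) := by
    rw [← pow_add]; congr 1; omega
  rw [h2, Nat.mod_mul_right_div_self]
  rw [Nat.mod_mod_of_dvd _ (dvd_pow_self 2 (by omega : i + 1 ≠ 0))]

lemma binSym_lex : ∀ k {a b : ℕ}, a < b → b < 2 ^ k → List.Lex (· < ·) (binSym k a) (binSym k b) := by
  intro k
  induction k with
  | zero => intro a b hab hb; simp at hb; omega
  | succ k ih =>
    intro a b hab hb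
    rw [binSym_succ, binSym_succ]
    have hbq : b / 2 ^ k < 2 := Nat.div_lt_of_lt_mul (by rw [pow_succ] at hb; omega)
    have haq : a / 2 ^ k ≤ b / 2 ^ k := Nat.div_le_div_right (le_of_lt hab)
    have ham : a / 2 ^ k % 2 = a / 2 ^ k := Nat.mod_eq_of_lt (by omega)
    have hbm : b / 2 ^ k % 2 = b / 2 ^ k := Nat.mod_eq_of_lt hbq
    rcases lt_or_eq_of_le haq with h | h
    · exact List.Lex.rel (by omega)
    · rw [ham, hbm, h]
      apply List.Lex.cons
      apply ih
      · have h1 := Nat.div_add_mod a (2 ^ k)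
        have h2 := Nat.div_add_mod b (2 ^ k)
        rw [h] at h1
        omega
      · exact Nat.mod_lt _ (Nat.two_pow_pos k)



lemma len_flat (f : ℕ → List ℕ) (β : ℕ) : ∀ t, (∀ s, s < t → (f s).length = β) →
    (((List.range t).map f).flatten).length = t * β := by
  intro t
  induction t with
  | zero => simp
  | succ t ih =>
    intro h
    rw [List.range_succ, List.map_append, List.flatten_append, List.length_append,
      ih (fun s hs => h s (by omega))]
    simp only [List.map_cons, List.map_nil, List.flatten_cons, List.flatten_nil,
      List.append_nil, h t (by omega)]
    ring

lemma flatten_decomp (f : ℕ → List ℕ) {m t : ℕ} (ht : t < m) :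
    ((List.range m).map f).flatten =
      ((List.range t).map f).flatten ++
        (f t ++ ((List.range (m - t - 1)).map (fun s => f (t + 1 + s))).flatten) := by
  obtain ⟨d, rfl⟩ : ∃ d, m = t + 1 + d := ⟨m - t - 1, by omega⟩
  have hd : t + 1 + d - t - 1 = d := by omega
  rw [hd, List.range_add, List.range_succ, List.map_append, List.map_append,
    List.flatten_append, List.flatten_append, List.map_map]
  simp only [List.map_cons, List.map_nil, List.flatten_cons, List.flatten_nil,
    List.append_nil, Function.comp]
  rw [List.append_assoc]
  rfl

lemma lex_sandwich' {P S V : List ℕ} (h1 : LexLe P S) (h2 : LexLe S V) (h3 : P <+: V) :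
    P <+: S := by
  obtain ⟨Q, rfl⟩ := h3
  exact lex_sandwich h1 h2

end Stmt7Aux

theorem stmt7 (m ℓ : ℕ) (hm : 1 ≤ m) (hℓ : 1 ≤ ℓ) (W : ℕ → List ℕ)
    (hWlen : ∀ i, 1 ≤ i → i ≤ m → (W i).length = ℓ)
    (hWbin : ∀ i, 1 ≤ i → i ≤ m → ∀ a ∈ W i, a < 2)
    (sa isa : ℕ → ℕ) (hsa : IsSuffixArray (SeqToString m W) sa)
    (hisa : ∀ j, 1 ≤ j → j ≤ (SeqToString m W).length →
      1 ≤ isa j ∧ isa j ≤ (SeqToString m W).length ∧ sa (isa j) = j)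
    (i p : ℕ) (hi1 : 1 ≤ i) (hi2 : i ≤ m) (hp : p ≤ ℓ) :
    PrefixRank W i ((W i).take p) =
      isa (i * (ℓ + Nat.log 2 m + 2) - ((1 + Nat.log 2 m) + p)) -
        RangeBeg (((W i).take p).reverse ++ [4]) (SeqToString m W) := by
  classical
  open Stmt7Aux in
  set k := 1 + Nat.log 2 m with hk
  set β := ℓ + Nat.log 2 m + 2 with hβ
  set X := (W i).take p with hX
  set T := SeqToString m W with hTdef
  set blk : ℕ → List ℕ := fun t => (W (t + 1)).reverse ++ [4] ++ sEnc k t with hblk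
  have hT : T = ((List.range m).map blk).flatten := rfl
  have hXlen : X.length = p := by
    rw [hX, List.length_take, hWlen i hi1 hi2]; omega
  have hXlt : ∀ a ∈ X, a < 2 := fun a ha => hWbin i hi1 hi2 a (List.mem_of_mem_take ha)
  have hXpreWi : X <+: W i := List.take_prefix p (W i)
  have hblklen : ∀ t, t < m → (blk t).length = β := by
    intro t ht
    simp only [hblk, List.length_append, List.length_reverse, List.length_cons,
      List.length_nil, Stmt7Aux.length_sEnc, hWlen (t+1) (by omega) (by omega)]
    omega
  have hTlen : T.length = m * β := by
    rw [hT, Stmt7Aux.len_flat blk β m hblklen]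
  have hsufgen : ∀ t r, t < m → r ≤ β →
      Suf T (t * β + r + 1) = (blk t).drop r ++
        ((List.range (m - t - 1)).map (fun s => blk (t + 1 + s))).flatten := by
    intro t r ht hr
    show T.drop (t * β + r + 1 - 1) = _
    have h1 : t * β + r + 1 - 1 = t * β + r := by omega
    rw [h1, hT, Stmt7Aux.flatten_decomp blk ht]
    have hA : (((List.range t).map blk).flatten).length = t * β :=
      Stmt7Aux.len_flat blk β t (fun s hs => hblklen s (by omega))
    rw [← hA, List.drop_length_add_append]
    exact List.drop_append_of_le_length (by rw [hblklen t ht]; exact hr)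
  have hsufX : ∀ i', 1 ≤ i' → i' ≤ m → X <+: W i' →
      Suf T ((i' - 1) * β + (ℓ - p) + 1) = (X.reverse ++ [4]) ++
        (sEnc k (i' - 1) ++
          ((List.range (m - (i' - 1) - 1)).map (fun s => blk (i' - 1 + 1 + s))).flatten) := by
    intro i' h1 h2 hpre
    have ht : i' - 1 < m := by omega
    have hWl : (W i').length = ℓ := hWlen i' h1 h2
    rw [hsufgen (i' - 1) (ℓ - p) ht (by omega)]
    have hwt : i' - 1 + 1 = i' := by omega
    have hrev : (W i').reverse.drop (ℓ - p) = X.reverse := by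
      have h3 : X = (W i').take p := by
        rw [List.prefix_iff_eq_take.mp hpre, hXlen]
      rw [h3, List.reverse_take, hWl]
    have hdrop : (blk (i' - 1)).drop (ℓ - p) = (X.reverse ++ [4]) ++ sEnc k (i' - 1) := by
      show ((W (i' - 1 + 1)).reverse ++ [4] ++ sEnc k (i' - 1)).drop (ℓ - p) = _
      rw [hwt, List.drop_append_of_le_length (by simp only [List.length_append, List.length_reverse, List.length_cons, List.length_nil, hWl]; omega),
        List.drop_append_of_le_length (by simp only [List.length_append, List.length_reverse, List.length_cons, List.length_nil, hWl]; omega), hrev]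
    rw [hdrop, List.append_assoc]
  have hpos_le : ∀ i', 1 ≤ i' → i' ≤ m → (i' - 1) * β + (ℓ - p) + 1 ≤ T.length := by
    intro i' h1 h2
    have hsm : i' * β = (i' - 1) * β + β := by
      nth_rewrite 1 [show i' = i' - 1 + 1 by omega]
      rw [add_mul, one_mul]
    have h4 : i' * β ≤ m * β := Nat.mul_le_mul_right β h2
    omega
  have hmlt : m < 2 ^ k := by
    have h1 := Nat.lt_pow_succ_log_self (by norm_num : 1 < 2) m
    calc m < 2 ^ (Nat.log 2 m + 1) := h1
    _ = 2 ^ k := by rw [hk, add_comm]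
  have hOrderLt : ∀ i₁ i₂, 1 ≤ i₁ → i₂ ≤ m → i₁ < i₂ → X <+: W i₁ → X <+: W i₂ →
      LexLt (Suf T ((i₁ - 1) * β + (ℓ - p) + 1)) (Suf T ((i₂ - 1) * β + (ℓ - p) + 1)) := by
    intro i₁ i₂ h1 h2 h12 hp1 hp2
    rw [hsufX i₁ h1 (by omega) hp1, hsufX i₂ (by omega) h2 hp2]
    refine List.Lex.append_left _ ?_ _
    refine Stmt7Aux.lex_append_of_eq_len ?_ (by simp [Stmt7Aux.length_sEnc]) _ _
    exact Stmt7Aux.lex_map_add2 (Stmt7Aux.binSym_lex k (by omega) (by omega))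
  have hchar : ∀ j', 1 ≤ j' → j' ≤ T.length → (X.reverse ++ [4]) <+: Suf T j' →
      ∃ i', 1 ≤ i' ∧ i' ≤ m ∧ X <+: W i' ∧ j' = (i' - 1) * β + (ℓ - p) + 1 := by
    intro j' h1 h2 hpre
    have hβpos : 0 < β := by omega
    obtain ⟨t, r, hrβ, hj1⟩ : ∃ t r, r < β ∧ j' = t * β + r + 1 := by
      refine ⟨(j' - 1) / β, (j' - 1) % β, Nat.mod_lt _ hβpos, ?_⟩
      have h0 := Nat.div_add_mod (j' - 1) β
      have hc : β * ((j' - 1) / β) = ((j' - 1) / β) * β := mul_comm _ _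
      omega
    have htm : t < m := by
      by_contra h
      push_neg at h
      have h3 : m * β ≤ t * β := Nat.mul_le_mul_right β h
      omega
    rw [hj1, hsufgen t r htm (le_of_lt hrβ)] at hpre
    have hWl : (W (t + 1)).length = ℓ := hWlen (t + 1) (by omega) (by omega)
    by_cases hcase : r ≤ ℓ
    · have hsplit : (blk t).drop r = ((W (t + 1)).reverse.drop r ++ [4]) ++ sEnc k t := by
        show ((W (t + 1)).reverse ++ [4] ++ sEnc k t).drop r = _
        rw [List.drop_append_of_le_length (by simp only [List.length_append, List.length_reverse, List.length_cons, List.length_nil, hWl]; omega),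
          List.drop_append_of_le_length (by simp only [List.length_append, List.length_reverse, List.length_cons, List.length_nil, hWl]; omega)]
      rw [hsplit] at hpre
      have hpre' : X.reverse ++ [4] <+:
          (W (t + 1)).reverse.drop r ++ [4] ++ (sEnc k t ++
            ((List.range (m - t - 1)).map (fun s => blk (t + 1 + s))).flatten) := by
        simpa [List.append_assoc] using hpre
      have heq : X.reverse = (W (t + 1)).reverse.drop r := by
        refine Stmt7Aux.prefix_four hpre' ?_ ?_
        · intro hmem
          have := hXlt 4 (List.mem_reverse.mp hmem)
          omega
        · intro hmem
          have := hWbin (t + 1) (by omega) (by omega) 4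
            (List.mem_reverse.mp (List.mem_of_mem_drop hmem))
          omega
      have hlen : p = ℓ - r := by
        have h5 := congrArg List.length heq
        simp only [List.length_reverse, List.length_drop, hXlen, hWl] at h5
        omega
      have hr' : r = ℓ - p := by omega
      have htake : X = (W (t + 1)).take p := by
        apply List.reverse_injective
        rw [heq, List.reverse_take, hWl, hr']
      refine ⟨t + 1, by omega, by omega, htake ▸ List.take_prefix p (W (t + 1)), ?_⟩
      have h6 : t + 1 - 1 = t := by omega
      rw [h6, hj1, hr']
    · exfalso
      have hsplit : (blk t).drop r = (sEnc k t).drop (r - (ℓ + 1)) := by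
        show ((W (t + 1)).reverse ++ [4] ++ sEnc k t).drop r = _
        have h7 : r = ((W (t + 1)).reverse ++ [4]).length + (r - (ℓ + 1)) := by
          simp only [List.length_append, List.length_reverse, List.length_cons,
            List.length_nil, hWl]
          omega
        nth_rewrite 1 [h7]
        rw [List.drop_length_add_append]
      rw [hsplit] at hpre
      have hne : (sEnc k t).drop (r - (ℓ + 1)) ≠ [] := by
        apply List.ne_nil_of_length_pos
        rw [List.length_drop, Stmt7Aux.length_sEnc]
        omega
      obtain ⟨d, ds, hds⟩ := List.exists_cons_of_ne_nil hne
      have hd : 2 ≤ d ∧ d ≤ 3 :=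
        Stmt7Aux.mem_sEnc (List.mem_of_mem_drop (hds ▸ (List.mem_cons_self : d ∈ d :: ds)))
      rw [hds] at hpre
      cases hXr : X.reverse with
      | nil =>
        rw [hXr] at hpre
        simp only [List.nil_append, List.cons_append, List.cons_prefix_cons] at hpre
        omega
      | cons x xs =>
        have hx : x < 2 := hXlt x (List.mem_reverse.mp (hXr ▸ (List.mem_cons_self : x ∈ x :: xs)))
        rw [hXr] at hpre
        simp only [List.cons_append, List.cons_prefix_cons] at hpre
        omega
  -- the position j
  have key : i * β - (k + p) = (i - 1) * β + (ℓ - p) + 1 := by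
    have hiβ : i * β = (i - 1) * β + β := by
      nth_rewrite 1 [show i = i - 1 + 1 by omega]
      rw [add_mul, one_mul]
    omega
  rw [key]
  obtain ⟨j, hjdef⟩ : ∃ j', j' = (i - 1) * β + (ℓ - p) + 1 := ⟨_, rfl⟩
  rw [← hjdef]
  have hj1 : 1 ≤ j := by omega
  have hj2 : j ≤ T.length := by rw [hjdef]; exact hpos_le i hi1 hi2
  have hsufji := hsufX i hi1 hi2 hXpreWi
  rw [← hjdef] at hsufji
  obtain ⟨hq1, hq2, hqsa⟩ := hisa j hj1 hj2
  obtain ⟨q, hqdef⟩ : ∃ q', q' = isa j := ⟨_, rfl⟩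
  rw [← hqdef] at hq1 hq2 hqsa ⊢
  set S1 : Set ℕ := {j' | 1 ≤ j' ∧ j' ≤ T.length ∧ LexLt (Suf T j') (Suf T j)} with hS1def
  set S0 : Set ℕ := {j' | 1 ≤ j' ∧ j' ≤ T.length ∧ LexLt (Suf T j') (X.reverse ++ [4])}
    with hS0def
  set M : Set ℕ := {j' | 1 ≤ j' ∧ j' ≤ T.length ∧ LexLe (X.reverse ++ [4]) (Suf T j') ∧
    LexLe (Suf T j') (Suf T j)} with hMdef
  have hRB : RangeBeg (X.reverse ++ [4]) T = S0.ncard := rfl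
  have hS1fin : S1.Finite :=
    (Set.finite_Icc 1 T.length).subset (fun x hx => Set.mem_Icc.mpr ⟨hx.1, hx.2.1⟩)
  have hS0fin : S0.Finite :=
    (Set.finite_Icc 1 T.length).subset (fun x hx => Set.mem_Icc.mpr ⟨hx.1, hx.2.1⟩)
  have hSuf_inj : ∀ j₁ j₂, 1 ≤ j₁ → j₁ ≤ T.length → 1 ≤ j₂ → j₂ ≤ T.length →
      Suf T j₁ = Suf T j₂ → j₁ = j₂ := by
    intro j₁ j₂ ha hb hc hd h
    have h5 := congrArg List.length h
    simp only [Suf, List.length_drop] at h5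
    omega
  have hsa_mono := hsa.2.2
  -- Step A : S1 = sa '' Icc 1 (q-1)
  have hS1 : S1 = sa '' Set.Icc 1 (q - 1) := by
    ext j'
    constructor
    · rintro ⟨ha, hb, hc⟩
      obtain ⟨q', hq'1, hq'2, hq'⟩ := hsa.2.1 j' ha hb
      refine ⟨q', Set.mem_Icc.mpr ⟨hq'1, ?_⟩, hq'⟩
      by_contra hcon
      push_neg at hcon
      rcases eq_or_lt_of_le (show q ≤ q' by omega) with heq | hlt
      · rw [← heq, hqsa] at hq'
        rw [hq'] at hc
        exact Stmt7Aux.lexlt_irrefl _ hc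
      · have h6 := hsa_mono q q' hq1 hlt hq'2
        rw [hqsa, hq'] at h6
        exact Stmt7Aux.lexlt_asymm hc h6
    · rintro ⟨q', hq'mem, rfl⟩
      obtain ⟨hq'1, hq'2⟩ := Set.mem_Icc.mp hq'mem
      have hq'le : q' ≤ T.length := by omega
      have hlt : q' < q := by omega
      refine ⟨(hsa.1 q' hq'1 hq'le).1, (hsa.1 q' hq'1 hq'le).2, ?_⟩
      have h6 := hsa_mono q' q hq'1 hlt hq2
      rw [hqsa] at h6
      exact h6
  have hinjOn : Set.InjOn sa (Set.Icc 1 (q - 1)) := by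
    intro a ha b hb hab
    obtain ⟨ha1, ha2⟩ := Set.mem_Icc.mp ha
    obtain ⟨hb1, hb2⟩ := Set.mem_Icc.mp hb
    by_contra hne
    rcases Nat.lt_or_ge a b with h | h
    · have h6 := hsa_mono a b ha1 h (by omega)
      rw [hab] at h6
      exact Stmt7Aux.lexlt_irrefl _ h6
    · have h6 := hsa_mono b a hb1 (by omega) (by omega)
      rw [hab] at h6
      exact Stmt7Aux.lexlt_irrefl _ h6
  have hS1card : S1.ncard = q - 1 := by
    rw [hS1, Set.ncard_image_of_injOn hinjOn, ← Finset.coe_Icc, Set.ncard_coe_finset,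
      Nat.card_Icc]
    omega
  -- Step B : M is the image of the prefix-rank set
  have hMeq : M = (fun i' => (i' - 1) * β + (ℓ - p) + 1) ''
      {i' | 1 ≤ i' ∧ i' ≤ i ∧ X <+: W i'} := by
    ext j'
    constructor
    · rintro ⟨ha, hb, hc, hd⟩
      have hpre : (X.reverse ++ [4]) <+: Suf T j' :=
        Stmt7Aux.lex_sandwich' hc hd (by rw [hsufji]; exact List.prefix_append _ _)
      obtain ⟨i', ha1, ha2, ha3, rfl⟩ := hchar j' ha hb hpre
      refine ⟨i', ⟨ha1, ?_, ha3⟩, rfl⟩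
      by_contra hgt
      push_neg at hgt
      have hlt := hOrderLt i i' hi1 ha2 hgt hXpreWi ha3
      rw [← hjdef] at hlt
      rcases hd with hd | hd
      · exact Stmt7Aux.lexlt_asymm hlt hd
      · rw [hd] at hlt
        exact Stmt7Aux.lexlt_irrefl _ hlt
    · rintro ⟨i', ⟨ha1, ha2, ha3⟩, rfl⟩
      have h2m : i' ≤ m := le_trans ha2 hi2
      refine ⟨Nat.succ_le_succ (Nat.zero_le _), hpos_le i' ha1 h2m, ?_, ?_⟩
      · rw [hsufX i' ha1 h2m ha3]
        exact Stmt7Aux.lexle_of_prefix (List.prefix_append _ _)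
      · rcases eq_or_lt_of_le ha2 with heq | hlt
        · right
          rw [heq, hjdef]
        · left
          rw [hjdef]
          exact hOrderLt i' i ha1 hi2 hlt ha3 hXpreWi
  have hMcard : M.ncard = PrefixRank W i X := by
    rw [hMeq, Set.ncard_image_of_injOn]
    · rfl
    · intro a ha b hb hab
      simp only [Set.mem_setOf_eq] at ha hb
      have hab' : (a - 1) * β + (ℓ - p) + 1 = (b - 1) * β + (ℓ - p) + 1 := hab
      have h6 : (a - 1) * β = (b - 1) * β := by omega
      have h7 : a - 1 = b - 1 := Nat.eq_of_mul_eq_mul_right (by omega) h6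
      omega
  -- Step C : M = insert j (S1 \ S0)
  have hjM : j ∈ M := by
    refine ⟨hj1, hj2, ?_, Or.inr rfl⟩
    rw [hsufji]
    exact Stmt7Aux.lexle_of_prefix (List.prefix_append _ _)
  have hMdecomp : M = insert j (S1 \ S0) := by
    ext j'
    simp only [Set.mem_insert_iff, Set.mem_diff]
    constructor
    · rintro ⟨ha, hb, hc, hd⟩
      by_cases hjj : j' = j
      · exact Or.inl hjj
      · right
        have hlt : LexLt (Suf T j') (Suf T j) := by
          rcases hd with hd | hd
          · exact hd
          · exact absurd (hSuf_inj j' j ha hb hj1 hj2 hd) hjj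
        refine ⟨⟨ha, hb, hlt⟩, ?_⟩
        rintro ⟨-, -, hS0'⟩
        rcases hc with hc | hc
        · exact Stmt7Aux.lexlt_asymm hS0' hc
        · rw [← hc] at hS0'
          exact Stmt7Aux.lexlt_irrefl _ hS0'
    · rintro (rfl | ⟨⟨ha, hb, hc⟩, hnot⟩)
      · exact hjM
      · refine ⟨ha, hb, ?_, Or.inl hc⟩
        rcases Stmt7Aux.lexlt_trichotomy (X.reverse ++ [4]) (Suf T j') with h | h | h
        · exact Or.inl h
        · exact Or.inr h
        · exact absurd ⟨ha, hb, h⟩ hnot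
  have hS0sub : S0 ⊆ S1 := by
    rintro j' ⟨ha, hb, hc⟩
    refine ⟨ha, hb, Stmt7Aux.lexlt_of_lexlt_prefix hc ?_⟩
    rw [hsufji]
    exact List.prefix_append _ _
  have hjnotin : j ∉ S1 \ S0 := fun h => Stmt7Aux.lexlt_irrefl _ h.1.2.2
  have hc1 : M.ncard = (S1 \ S0).ncard + 1 := by
    rw [hMdecomp, Set.ncard_insert_of_notMem hjnotin (hS1fin.diff (t := S0))]
  have hc2 : (S1 \ S0).ncard = S1.ncard - S0.ncard := Set.ncard_diff hS0sub hS0fin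
  have hc3 : S0.ncard ≤ S1.ncard := Set.ncard_le_ncard hS0sub hS1fin
  rw [hRB]
  omega
end
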